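/- arXiv:2208.10829 — 5 statements merged into one kernel-verified Lean document; each statement's English description precedes it below -/
import Mathlib

section
/- Let π : ℝⁿ → ℝ be continuous with π(x) > 0 for all x, and let ρ : ℝⁿ → ℝᵐ be continuous. For each x ∈ ℝⁿ define the compact convex set C(x) := convexHull( closedBall(0, π(x)) ∪ { ρ(x), −ρ(x) } ) ⊆ ℝᵐ, and define the Minkowski functional γ : ℝⁿ × ℝᵐ → ℝ by γ(x, u) := inf { λ ≥ 0 : u ∈ λ • C(x) }. Then γ is continuous on ℝⁿ × ℝᵐ, and for each fixed x ∈ ℝⁿ the function u ↦ γ(x, u) is a norm on ℝᵐ: it is nonnegative, vanishes exactly at u = 0, is positively homogeneous with γ(x, c·u) = |c|·γ(x, u) for all c ∈ ℝ, and satisfies the triangle inequality γ(x, u + v) ≤ γ(x, u) + γ(x, v). -/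
open Filter Topology Set Pointwise

/-- Shorthand for Euclidean space ℝⁿ. -/
abbrev Euc (n : ℕ) := EuclideanSpace ℝ (Fin n)

/-- continuity and norm properties of the Minkowski functional of the sets
`C(x) := convexHull (closedBall(0, p x) ∪ {r x, −r x})`. -/
theorem stmt_5 {n m : ℕ}
    (p : Euc n → ℝ) (hpcont : Continuous p) (hppos : ∀ x, 0 < p x)
    (r : Euc n → Euc m) (hrcont : Continuous r)
    (Cs : Euc n → Set (Euc m))
    (hCs : ∀ x, Cs x = convexHull ℝ (Metric.closedBall (0 : Euc m) (p x) ∪ {r x, -r x}))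
    (γ : Euc n → Euc m → ℝ)
    (hγ : ∀ x u, γ x u = sInf {l : ℝ | 0 ≤ l ∧ u ∈ l • Cs x}) :
    Continuous (fun q : Euc n × Euc m => γ q.1 q.2) ∧
    ∀ x : Euc n,
      (∀ u, 0 ≤ γ x u) ∧
      (∀ u, γ x u = 0 ↔ u = 0) ∧
      (∀ (c : ℝ) (u : Euc m), γ x (c • u) = |c| * γ x u) ∧
      (∀ u v : Euc m, γ x (u + v) ≤ γ x u + γ x v) := by
  have hp0 : ∀ x, (0:ℝ) ≤ p x := fun x => (hppos x).le
  have hconv : ∀ x, Convex ℝ (Cs x) := fun x => (hCs x) ▸ convex_convexHull ℝ _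
  have hball : ∀ x, Metric.closedBall (0 : Euc m) (p x) ⊆ Cs x := fun x =>
    (hCs x) ▸ (Set.subset_union_left.trans (subset_convexHull ℝ _))
  have h0mem : ∀ x, (0:Euc m) ∈ Cs x := fun x => hball x (Metric.mem_closedBall_self (hp0 x))
  have hrmem : ∀ x, r x ∈ Cs x := fun x =>
    (hCs x) ▸ subset_convexHull ℝ _ (Or.inr (Or.inl rfl))
  have habs : ∀ x, Absorbent ℝ (Cs x) := fun x =>
    (absorbent_ball_zero (hppos x)).mono (Metric.ball_subset_closedBall.trans (hball x))
  have hSneg : ∀ x, -(Cs x) = Cs x := by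
    intro x
    have hgen : -(Metric.closedBall (0:Euc m) (p x) ∪ {r x, -r x})
        = Metric.closedBall (0:Euc m) (p x) ∪ {r x, -r x} := by
      ext v
      simp only [Set.mem_neg, Set.mem_union, Metric.mem_closedBall, dist_zero_right,
        Set.mem_insert_iff, Set.mem_singleton_iff, norm_neg]
      constructor
      · rintro (h | h | h)
        · exact Or.inl h
        · exact Or.inr (Or.inr (neg_eq_iff_eq_neg.1 h))
        · exact Or.inr (Or.inl (neg_inj.1 h))
      · rintro (h | rfl | rfl)
        · exact Or.inl h
        · exact Or.inr (Or.inr rfl)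
        · exact Or.inr (Or.inl (neg_neg _))
    rw [hCs x, ← convexHull_neg, hgen]
  have hsym : ∀ x, ∀ u ∈ Cs x, -u ∈ Cs x := by
    intro x u hu
    rw [← hSneg x]
    exact Set.neg_mem_neg.2 hu
  have hbal : ∀ x, Balanced ℝ (Cs x) :=
    fun x => (balanced_iff_neg_mem (hconv x)).2 (fun u hu => hsym x u hu)
  have hbdd : ∀ x, Bornology.IsVonNBounded ℝ (Cs x) := by
    intro x
    refine (NormedSpace.isVonNBounded_closedBall ℝ (Euc m) (max (p x) ‖r x‖)).subset ?_
    rw [hCs x]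
    refine convexHull_min ?_ (convex_closedBall _ _)
    refine Set.union_subset (Metric.closedBall_subset_closedBall (le_max_left _ _)) ?_
    rintro v (rfl | rfl)
    · exact mem_closedBall_zero_iff.2 (le_max_right _ _)
    · exact mem_closedBall_zero_iff.2 (by rw [norm_neg]; exact le_max_right _ _)
  -- γ is the gauge
  have hγg : ∀ x u, γ x u = gauge (Cs x) u := by
    intro x u
    rw [hγ]
    by_cases hu : u = 0
    · subst hu
      rw [gauge_zero]
      have hset : {l : ℝ | 0 ≤ l ∧ (0:Euc m) ∈ l • Cs x} = Set.Ici 0 := by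
        ext l
        simp only [Set.mem_setOf_eq, Set.mem_Ici]
        exact ⟨fun h => h.1, fun h => ⟨h, ⟨0, h0mem x, smul_zero l⟩⟩⟩
      rw [hset, csInf_Ici]
    · unfold gauge
      congr 1
      ext l
      simp only [Set.mem_setOf_eq]
      constructor
      · rintro ⟨hl, hmem⟩
        rcases hl.eq_or_lt with rfl | h
        · exfalso
          rw [zero_smul_set ⟨0, h0mem x⟩] at hmem
          exact hu hmem
        · exact ⟨h, hmem⟩
      · rintro ⟨hl, hmem⟩
        exact ⟨hl.le, hmem⟩
  -- enlarging the scale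
  have henl : ∀ (x : Euc n) (a b : ℝ), 0 ≤ a → a ≤ b → a • Cs x ⊆ b • Cs x := by
    intro x a b ha hab
    have hb : b • Cs x = a • Cs x + (b - a) • Cs x := by
      rw [← (hconv x).add_smul ha (sub_nonneg.2 hab), add_sub_cancel]
    rw [hb]
    intro w hw
    have h0' : (0:Euc m) ∈ (b - a) • Cs x := by
      have := Set.smul_mem_smul_set (a := b - a) (h0mem x)
      rwa [smul_zero] at this
    have := Set.add_mem_add hw h0'
    rwa [add_zero] at this
  -- key inclusion
  have key : ∀ x y : Euc n,
      Cs y ⊆ (max (p y / p x) (1 + ‖r y - r x‖ / p x)) • Cs x := by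
    intro x y
    set t : ℝ := max (p y / p x) (1 + ‖r y - r x‖ / p x) with ht_def
    have hd0 : (0:ℝ) ≤ ‖r y - r x‖ / p x := div_nonneg (norm_nonneg _) (hp0 x)
    have h1t : (1:ℝ) ≤ t := le_max_of_le_right (le_add_of_nonneg_right hd0)
    have ht : (0:ℝ) < t := lt_of_lt_of_le one_pos h1t
    rw [hCs y]
    refine convexHull_min (Set.union_subset ?_ ?_) ((hconv x).smul t)
    · intro v hv
      have hvb : v ∈ t • Metric.closedBall (0:Euc m) (p x) := by
        rw [smul_closedBall _ _ (hp0 x), smul_zero]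
        refine Metric.closedBall_subset_closedBall ?_ hv
        rw [Real.norm_eq_abs, abs_of_pos ht]
        exact (div_le_iff₀ (hppos x)).1 (le_max_left _ _)
      exact Set.smul_set_mono (hball x) hvb
    · have hry : r y ∈ t • Cs x := by
        have h2 : r y - r x ∈ (‖r y - r x‖ / p x) • Cs x := by
          refine Set.smul_set_mono (hball x) ?_
          rw [smul_closedBall _ _ (hp0 x), smul_zero]
          refine mem_closedBall_zero_iff.2 ?_
          rw [Real.norm_eq_abs, abs_of_nonneg hd0, div_mul_cancel₀ _ (hppos x).ne']
        have h3 : r y ∈ ((1:ℝ) + ‖r y - r x‖ / p x) • Cs x := by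
          rw [(hconv x).add_smul zero_le_one hd0]
          have h1 : r x ∈ (1:ℝ) • Cs x := by rw [one_smul]; exact hrmem x
          have := Set.add_mem_add h1 h2
          rwa [add_sub_cancel] at this
        exact henl x _ t (by positivity) (le_max_right _ _) h3
      rintro v (rfl | rfl)
      · exact hry
      · obtain ⟨c, hc, hc'⟩ := hry
        refine ⟨-c, hsym x c hc, ?_⟩
        show t • -c = -r y
        rw [smul_neg]
        exact congrArg Neg.neg hc'
  -- gauge comparison
  have hcomp : ∀ (x y : Euc n) (u : Euc m),
      gauge (Cs x) u ≤ (max (p y / p x) (1 + ‖r y - r x‖ / p x)) * gauge (Cs y) u := by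
    intro x y u
    set t : ℝ := max (p y / p x) (1 + ‖r y - r x‖ / p x) with ht_def
    have hd0 : (0:ℝ) ≤ ‖r y - r x‖ / p x := div_nonneg (norm_nonneg _) (hp0 x)
    have h1t : (1:ℝ) ≤ t := le_max_of_le_right (le_add_of_nonneg_right hd0)
    have ht : (0:ℝ) < t := lt_of_lt_of_le one_pos h1t
    have hmono := gauge_mono (habs y) (key x y) u
    rw [gauge_smul_left_of_nonneg ht.le] at hmono
    simp only [Pi.smul_apply, smul_eq_mul] at hmono
    calc gauge (Cs x) u = t * (t⁻¹ * gauge (Cs x) u) :=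
          (mul_inv_cancel_left₀ ht.ne' _).symm
      _ ≤ t * gauge (Cs y) u := by
          exact mul_le_mul_of_nonneg_left hmono ht.le
  -- upper bound by norm
  have hub : ∀ x w, gauge (Cs x) w ≤ ‖w‖ / p x := by
    intro x w
    have := gauge_mono (absorbent_ball_zero (hppos x))
      (Metric.ball_subset_closedBall.trans (hball x)) w
    rwa [gauge_ball (hp0 x)] at this
  -- gauge (Cs x) is Lipschitz hence continuous in u
  have hlip : ∀ x, Continuous (fun u : Euc m => gauge (Cs x) u) := by
    intro x
    have key2 : ∀ u v : Euc m, gauge (Cs x) u - gauge (Cs x) v ≤ (p x)⁻¹ * dist u v := by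
      intro u v
      have h1 : gauge (Cs x) u ≤ gauge (Cs x) v + gauge (Cs x) (u - v) := by
        have := gauge_add_le (hconv x) (habs x) v (u - v)
        rwa [add_sub_cancel] at this
      have h2 : gauge (Cs x) (u - v) ≤ ‖u - v‖ / p x := hub x _
      have h3 : (p x)⁻¹ * ‖u - v‖ = ‖u - v‖ / p x := inv_mul_eq_div _ _
      rw [dist_eq_norm, h3]
      linarith
    have hL : LipschitzWith ⟨(p x)⁻¹, inv_nonneg.2 (hp0 x)⟩ (fun u : Euc m => gauge (Cs x) u) := by
      refine LipschitzWith.of_dist_le_mul fun u v => ?_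
      rw [Real.dist_eq]
      refine abs_sub_le_iff.2 ⟨key2 u v, ?_⟩
      rw [dist_comm]
      exact key2 v u
    exact hL.continuous
  refine ⟨?_, ?_⟩
  · -- joint continuity
    have hfun : (fun q : Euc n × Euc m => γ q.1 q.2)
        = fun q : Euc n × Euc m => gauge (Cs q.1) q.2 := funext fun q => hγg _ _
    rw [hfun, continuous_iff_continuousAt]
    rintro ⟨x₀, u₀⟩
    set t₁ : Euc n → ℝ := fun x => max (p x / p x₀) (1 + ‖r x - r x₀‖ / p x₀) with ht₁
    set t₂ : Euc n → ℝ := fun x => max (p x₀ / p x) (1 + ‖r x₀ - r x‖ / p x) with ht₂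
    have ht₁pos : ∀ x, (0:ℝ) < t₁ x := fun x =>
      lt_of_lt_of_le one_pos (le_max_of_le_right
        (le_add_of_nonneg_right (div_nonneg (norm_nonneg _) (hp0 x₀))))
    have ht₁cont : Continuous t₁ :=
      (hpcont.div_const _).max
        (continuous_const.add (((hrcont.sub continuous_const).norm).div_const _))
    have ht₂cont : Continuous t₂ :=
      ((continuous_const.div hpcont (fun x => (hppos x).ne')).max
        (continuous_const.add ((continuous_const.sub hrcont).norm.div hpcont
          (fun x => (hppos x).ne'))))
    have ht₁x₀ : t₁ x₀ = 1 := by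
      simp only [ht₁, div_self (hppos x₀).ne', sub_self, norm_zero, zero_div, add_zero, max_self]
    have ht₂x₀ : t₂ x₀ = 1 := by
      simp only [ht₂, div_self (hppos x₀).ne', sub_self, norm_zero, zero_div, add_zero, max_self]
    have hlow : ∀ q : Euc n × Euc m,
        (t₁ q.1)⁻¹ * gauge (Cs x₀) q.2 ≤ gauge (Cs q.1) q.2 := by
      rintro ⟨x, u⟩
      have := hcomp x₀ x u
      calc (t₁ x)⁻¹ * gauge (Cs x₀) u ≤ (t₁ x)⁻¹ * (t₁ x * gauge (Cs x) u) :=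
            mul_le_mul_of_nonneg_left this (inv_nonneg.2 (ht₁pos x).le)
        _ = gauge (Cs x) u := inv_mul_cancel_left₀ (ht₁pos x).ne' _
    have hhigh : ∀ q : Euc n × Euc m,
        gauge (Cs q.1) q.2 ≤ t₂ q.1 * gauge (Cs x₀) q.2 := by
      rintro ⟨x, u⟩
      exact hcomp x x₀ u
    have hLcont : ContinuousAt (fun q : Euc n × Euc m => (t₁ q.1)⁻¹ * gauge (Cs x₀) q.2)
        (x₀, u₀) :=
      (((ht₁cont.comp continuous_fst).inv₀
        (fun q => (ht₁pos q.1).ne')).mul ((hlip x₀).comp continuous_snd)).continuousAt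
    have hUcont : ContinuousAt (fun q : Euc n × Euc m => t₂ q.1 * gauge (Cs x₀) q.2)
        (x₀, u₀) :=
      ((ht₂cont.comp continuous_fst).mul ((hlip x₀).comp continuous_snd)).continuousAt
    have hLval : (t₁ x₀)⁻¹ * gauge (Cs x₀) u₀ = gauge (Cs x₀) u₀ := by
      rw [ht₁x₀, inv_one, one_mul]
    have hUval : t₂ x₀ * gauge (Cs x₀) u₀ = gauge (Cs x₀) u₀ := by
      rw [ht₂x₀, one_mul]
    have hLt : Tendsto (fun q : Euc n × Euc m => (t₁ q.1)⁻¹ * gauge (Cs x₀) q.2)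
        (𝓝 (x₀, u₀)) (𝓝 (gauge (Cs x₀) u₀)) := hLval ▸ hLcont
    have hUt : Tendsto (fun q : Euc n × Euc m => t₂ q.1 * gauge (Cs x₀) q.2)
        (𝓝 (x₀, u₀)) (𝓝 (gauge (Cs x₀) u₀)) := hUval ▸ hUcont
    exact tendsto_of_tendsto_of_tendsto_of_le_of_le hLt hUt hlow hhigh
  · -- norm properties
    intro x
    refine ⟨fun u => ?_, fun u => ?_, fun c u => ?_, fun u v => ?_⟩
    · rw [hγg]; exact gauge_nonneg u
    · rw [hγg]; exact gauge_eq_zero (habs x) (hbdd x)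
    · rw [hγg, hγg, gauge_smul (hbal x) c u, Real.norm_eq_abs]
    · rw [hγg, hγg, hγg]
      exact gauge_add_le (hconv x) (habs x) u v
end

section
/- Let K ⊆ ℝⁿ and let T be a set-valued map from ℝⁿ to subsets of ℝᵐ such that: (i) T is lower semicontinuous at every point of K; (ii) T(x) is nonempty and convex for every x ∈ K; and (iii) the graph {(x, u) : x ∈ K, u ∈ T(x)} is closed in K × ℝᵐ. Then for every x ∈ K the set T(x) contains a unique element ρ(x) of minimum Euclidean norm (i.e., ρ(x) ∈ T(x) and |ρ(x)| ≤ |u| for all u ∈ T(x)), and the resulting minimal selection ρ : K → ℝᵐ is continuous on K. -/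
open Filter Topology Set

/-- a set-valued map `T` that is lower semicontinuous at every point of `K`
(relative to `K`), with nonempty convex values on `K` and graph closed in `K × ℝᵐ`, admits a
unique pointwise minimum-norm selection `ρ` on `K`, and `ρ` is continuous on `K`. -/
theorem stmt_6 {n m : ℕ} (K : Set (Euc n)) (T : Euc n → Set (Euc m))
    (hlsc : ∀ x ∈ K, ∀ U : Set (Euc m), IsOpen U → (T x ∩ U).Nonempty →
      ∀ᶠ y in nhdsWithin x K, (T y ∩ U).Nonempty)
    (hne : ∀ x ∈ K, (T x).Nonempty)
    (hcv : ∀ x ∈ K, Convex ℝ (T x))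
    (hgraph : ∀ q ∈ closure {q : Euc n × Euc m | q.1 ∈ K ∧ q.2 ∈ T q.1},
      q.1 ∈ K → q.2 ∈ T q.1) :
    ∃ ρ : Euc n → Euc m,
      (∀ x ∈ K,
        ρ x ∈ T x ∧
        (∀ u ∈ T x, ‖ρ x‖ ≤ ‖u‖) ∧
        (∀ u ∈ T x, (∀ v ∈ T x, ‖u‖ ≤ ‖v‖) → u = ρ x)) ∧
      ContinuousOn ρ K := by
  classical
  -- T x is closed for x ∈ K
  have hclosed : ∀ x ∈ K, ∀ u ∈ closure (T x), u ∈ T x := by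
    intro x hx u hu
    have h1 : ({x} ×ˢ T x : Set (Euc n × Euc m)) ⊆
        {q : Euc n × Euc m | q.1 ∈ K ∧ q.2 ∈ T q.1} := by
      rintro ⟨a, b⟩ ⟨ha, hb⟩
      simp only [Set.mem_singleton_iff] at ha
      exact ⟨ha ▸ hx, ha ▸ hb⟩
    have h2 : ((x, u) : Euc n × Euc m) ∈ closure ({x} ×ˢ T x) := by
      rw [closure_prod_eq, closure_singleton]
      exact ⟨rfl, hu⟩
    exact hgraph (x, u) (closure_mono h1 h2) hx
  -- existence of a minimum-norm element
  have hmin : ∀ x ∈ K, ∃ u, u ∈ T x ∧ ∀ v ∈ T x, ‖u‖ ≤ ‖v‖ := by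
    intro x hx
    obtain ⟨u0, hu0⟩ := hne x hx
    set S : Set (Euc m) := T x ∩ Metric.closedBall 0 ‖u0‖ with hS
    have hSc : IsCompact S := by
      apply Metric.isCompact_of_isClosed_isBounded
      · exact IsClosed.inter (isClosed_of_closure_subset (fun u hu => hclosed x hx u hu))
          Metric.isClosed_closedBall
      · exact Metric.isBounded_closedBall.subset Set.inter_subset_right
    have hSne : S.Nonempty := ⟨u0, hu0, by simp⟩
    obtain ⟨u, huS, humin⟩ := hSc.exists_isMinOn hSne (continuous_norm.continuousOn)
    refine ⟨u, huS.1, fun v hv => ?_⟩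
    by_cases h : ‖v‖ ≤ ‖u0‖
    · exact humin ⟨hv, by simpa [Metric.mem_closedBall] using h⟩
    · exact le_trans (humin ⟨hu0, by simp⟩) (le_of_not_ge h)
  -- uniqueness of the minimum-norm element
  have huniq : ∀ x ∈ K, ∀ u w, u ∈ T x → (∀ v ∈ T x, ‖u‖ ≤ ‖v‖) →
      w ∈ T x → (∀ v ∈ T x, ‖w‖ ≤ ‖v‖) → u = w := by
    intro x hx u w hu humin hw hwmin
    have hmem : (1/2 : ℝ) • u + (1/2 : ℝ) • w ∈ T x :=
      hcv x hx hu hw (by norm_num) (by norm_num) (by norm_num)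
    have h1 : ‖u‖ ≤ ‖(1/2 : ℝ) • u + (1/2 : ℝ) • w‖ := humin _ hmem
    have h2 : ‖(1/2 : ℝ) • u + (1/2 : ℝ) • w‖ = (1/2) * ‖u + w‖ := by
      rw [← smul_add, norm_smul]
      simp
    have h3 : ‖u‖ = ‖w‖ := le_antisymm (humin w hw) (hwmin u hu)
    have hpar := parallelogram_law_with_norm ℝ u w
    have h4 : ‖u - w‖ = 0 := by
      have h5 : (0:ℝ) ≤ ‖u - w‖ := norm_nonneg _
      nlinarith [norm_nonneg (u + w), norm_nonneg u]
    have := norm_sub_eq_zero_iff.mp h4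
    exact this
  set ρ : Euc n → Euc m := fun x =>
    if h : ∃ u, u ∈ T x ∧ ∀ v ∈ T x, ‖u‖ ≤ ‖v‖ then h.choose else 0 with hρdef
  have hρ : ∀ x ∈ K, ρ x ∈ T x ∧ ∀ v ∈ T x, ‖ρ x‖ ≤ ‖v‖ := by
    intro x hx
    have h := hmin x hx
    simp only [hρdef, dif_pos h]
    exact h.choose_spec
  -- the LSC upper bound on ‖ρ y‖ near x
  have hbound : ∀ x ∈ K, ∀ ε > (0:ℝ), ∀ᶠ y in nhdsWithin x K, ‖ρ y‖ ≤ ‖ρ x‖ + ε := by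
    intro x hx ε hε
    have hU : IsOpen (Metric.ball (0 : Euc m) (‖ρ x‖ + ε)) := Metric.isOpen_ball
    have hUne : (T x ∩ Metric.ball 0 (‖ρ x‖ + ε)).Nonempty := by
      refine ⟨ρ x, (hρ x hx).1, ?_⟩
      simp only [Metric.mem_ball, dist_zero_right]
      linarith
    have hev := hlsc x hx _ hU hUne
    have hevK : ∀ᶠ y in nhdsWithin x K, y ∈ K := eventually_mem_nhdsWithin
    filter_upwards [hev, hevK] with y hy hyK
    obtain ⟨w, hwT, hwB⟩ := hy
    simp only [Metric.mem_ball, dist_zero_right] at hwB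
    exact le_trans ((hρ y hyK).2 w hwT) (le_of_lt hwB)
  refine ⟨ρ, fun x hx => ⟨(hρ x hx).1, (hρ x hx).2,
    fun u hu humin => huniq x hx u (ρ x) hu humin (hρ x hx).1 (hρ x hx).2⟩, ?_⟩
  -- continuity
  intro x hx
  rw [ContinuousWithinAt]
  apply tendsto_of_subseq_tendsto
  intro ns hns
  -- eventually the sequence is in K with bounded ρ
  have hnsK : ∀ᶠ k in atTop, ns k ∈ K := hns.eventually eventually_mem_nhdsWithin
  have hnsB : ∀ᶠ k in atTop, ‖ρ (ns k)‖ ≤ ‖ρ x‖ + 1 :=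
    hns.eventually (hbound x hx 1 one_pos)
  have hfreq : ∃ᶠ k in atTop, ρ (ns k) ∈ Metric.closedBall (0 : Euc m) (‖ρ x‖ + 1) := by
    apply (hnsB.mono ?_).frequently
    intro k hk
    simpa [Metric.mem_closedBall, dist_zero_right] using hk
  obtain ⟨a, _, φ, hφ, hφtend⟩ :=
    tendsto_subseq_of_frequently_bounded Metric.isBounded_closedBall hfreq
  refine ⟨φ, ?_⟩
  -- the subsequence base points converge to x
  have hnsx : Tendsto (fun k => ns (φ k)) atTop (𝓝 x) :=
    (hns.mono_right nhdsWithin_le_nhds).comp hφ.tendsto_atTop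
  have hKφ : ∀ᶠ k in atTop, ns (φ k) ∈ K := hφ.tendsto_atTop.eventually hnsK
  -- a ∈ T x via the closed graph
  have haT : a ∈ T x := by
    have htp : Tendsto (fun k => ((ns (φ k), ρ (ns (φ k))) : Euc n × Euc m)) atTop
        (𝓝 (x, a)) := hnsx.prodMk_nhds hφtend
    have hmem : ∀ᶠ k in atTop,
        ((ns (φ k), ρ (ns (φ k))) : Euc n × Euc m) ∈
          {q : Euc n × Euc m | q.1 ∈ K ∧ q.2 ∈ T q.1} := by
      filter_upwards [hKφ] with k hk
      exact ⟨hk, (hρ _ hk).1⟩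
    exact hgraph (x, a) (mem_closure_of_tendsto htp hmem) hx
  -- ‖a‖ ≤ ‖ρ x‖
  have hale : ‖a‖ ≤ ‖ρ x‖ := by
    refine le_of_forall_pos_le_add (fun ε hε => ?_)
    have hev : ∀ᶠ k in atTop, ‖ρ (ns (φ k))‖ ≤ ‖ρ x‖ + ε :=
      hφ.tendsto_atTop.eventually (hns.eventually (hbound x hx ε hε))
    exact le_of_tendsto (hφtend.norm) hev
  have hamin : ∀ v ∈ T x, ‖a‖ ≤ ‖v‖ := fun v hv => hale.trans ((hρ x hx).2 v hv)
  have : a = ρ x := huniq x hx a (ρ x) haT hamin (hρ x hx).1 (hρ x hx).2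
  exact this ▸ hφtend
end

section
/- Let K ⊆ ℝⁿ, let Ψ be a set-valued map from ℝⁿ to subsets of ℝᵐ that is lower semicontinuous with nonempty convex values at every point of K, and let Γ : ℝⁿ × ℝᵐ → ℝ be upper semicontinuous such that for each x ∈ K the function u ↦ Γ(x, u) is convex on ℝᵐ. Assume strict feasibility: for every x ∈ K there exists u ∈ Ψ(x) with Γ(x, u) < 0. Then the set-valued map T(x) := { u ∈ Ψ(x) : Γ(x, u) ≤ 0 } is lower semicontinuous at every point of K and has nonempty convex values on K. -/
open Filter Topology Set

/-- if `Ψ` is lower semicontinuous with nonempty convex values at every point of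
`K`, `Γ` is upper semicontinuous and convex in `u`, and strict feasibility holds on `K`, then
`T x := {u ∈ Ψ x : Γ (x, u) ≤ 0}` is lower semicontinuous at every point of `K` with nonempty
convex values on `K`. -/
theorem stmt_7 {n m : ℕ} (K : Set (Euc n)) (Ψ : Euc n → Set (Euc m))
    (hlsc : ∀ x ∈ K, ∀ U : Set (Euc m), IsOpen U → (Ψ x ∩ U).Nonempty →
      ∀ᶠ y in nhdsWithin x K, (Ψ y ∩ U).Nonempty)
    (hne : ∀ x ∈ K, (Ψ x).Nonempty)
    (hcv : ∀ x ∈ K, Convex ℝ (Ψ x))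
    (Γ : Euc n × Euc m → ℝ) (hΓusc : UpperSemicontinuous Γ)
    (hΓcv : ∀ x ∈ K, ConvexOn ℝ Set.univ (fun u : Euc m => Γ (x, u)))
    (hfeas : ∀ x ∈ K, ∃ u ∈ Ψ x, Γ (x, u) < 0)
    (T : Euc n → Set (Euc m))
    (hT : ∀ x, T x = {u ∈ Ψ x | Γ (x, u) ≤ 0}) :
    (∀ x ∈ K, ∀ U : Set (Euc m), IsOpen U → (T x ∩ U).Nonempty →
      ∀ᶠ y in nhdsWithin x K, (T y ∩ U).Nonempty) ∧
    (∀ x ∈ K, (T x).Nonempty ∧ Convex ℝ (T x)) := by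
  constructor
  · rintro x hx U hU ⟨u, huT, huU⟩
    rw [hT] at huT
    obtain ⟨huΨ, huΓ⟩ := huT
    obtain ⟨w, hwΨ, hwΓ⟩ := hfeas x hx
    have hcont : Continuous (fun t : ℝ => (1 - t) • u + t • w) := by continuity
    have hmemU : ∀ᶠ t in 𝓝 (0 : ℝ), (1 - t) • u + t • w ∈ U := by
      have h0 : (1 - (0:ℝ)) • u + (0:ℝ) • w = u := by simp
      exact hcont.continuousAt.eventually_mem (hU.mem_nhds (by rw [h0]; exact huU))
    obtain ⟨t, htU, ht0, ht1⟩ :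
        ∃ t : ℝ, (1 - t) • u + t • w ∈ U ∧ 0 < t ∧ t < 1 := by
      have h1 : ∀ᶠ t in 𝓝[>] (0:ℝ), (1 - t) • u + t • w ∈ U :=
        nhdsWithin_le_nhds hmemU
      have h2 : ∀ᶠ t in 𝓝[>] (0:ℝ), t < 1 :=
        nhdsWithin_le_nhds (eventually_lt_nhds zero_lt_one)
      have h3 : ∀ᶠ t in 𝓝[>] (0:ℝ), 0 < t := eventually_mem_nhdsWithin
      obtain ⟨t, h⟩ := ((h1.and h2).and h3).exists
      exact ⟨t, h.1.1, h.2, h.1.2⟩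
    set v := (1 - t) • u + t • w with hv
    have hvΨ : v ∈ Ψ x :=
      hcv x hx huΨ hwΨ (by linarith) (le_of_lt ht0) (by ring)
    have hvΓ : Γ (x, v) < 0 := by
      have := (hΓcv x hx).2 (mem_univ u) (mem_univ w) (by linarith : (0:ℝ) ≤ 1 - t)
        (le_of_lt ht0) (by ring)
      simp only at this
      have h1 : (1 - t) * Γ (x, u) ≤ 0 :=
        mul_nonpos_of_nonneg_of_nonpos (by linarith) huΓ
      have h2 : t * Γ (x, w) < 0 := mul_neg_of_pos_of_neg ht0 hwΓ
      calc Γ (x, v) ≤ (1 - t) * Γ (x, u) + t * Γ (x, w) := this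
        _ < 0 := by linarith
    have husc : ∀ᶠ p in 𝓝 (x, v), Γ p < 0 := hΓusc (x, v) 0 hvΓ
    rw [Filter.eventually_iff, mem_nhds_prod_iff] at husc
    obtain ⟨V, hV, W, hW, hVW⟩ := husc
    have hW'open : IsOpen (interior W ∩ U) := isOpen_interior.inter hU
    have hvW' : v ∈ interior W ∩ U := ⟨mem_interior_iff_mem_nhds.2 hW, htU⟩
    have hΨW : ∀ᶠ y in nhdsWithin x K, (Ψ y ∩ (interior W ∩ U)).Nonempty :=
      hlsc x hx _ hW'open ⟨v, hvΨ, hvW'⟩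
    have hVev : ∀ᶠ y in nhdsWithin x K, y ∈ V :=
      mem_nhdsWithin_of_mem_nhds hV
    filter_upwards [hΨW, hVev] with y hy hyV
    obtain ⟨z, hzΨ, hzW, hzU⟩ := hy
    refine ⟨z, ?_, hzU⟩
    rw [hT]
    exact ⟨hzΨ, le_of_lt (hVW (Set.mk_mem_prod hyV (interior_subset hzW)))⟩
  · intro x hx
    constructor
    · obtain ⟨u, huΨ, huΓ⟩ := hfeas x hx
      exact ⟨u, by rw [hT]; exact ⟨huΨ, le_of_lt huΓ⟩⟩
    · rw [hT]
      have h1 := (hcv x hx).inter ((hΓcv x hx).convex_le 0)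
      convert h1 using 1
      ext u
      simp [Set.mem_inter_iff, Set.mem_setOf_eq, and_comm]
end

section
/- Let a > 0, b ≥ 0, and w̄₁, w̄₂ ≥ 0. For every x = (x₁, x₂) ∈ ℝ² there exists u ∈ ℝ such that for all (w₁, w₂) ∈ [0, w̄₁] × [0, w̄₂]: 4·x₁·x₂ + 2·x₂² + 2·(−a·sin x₁ − (b + w₂)·x₂ + u + w₁)·(x₂ + x₁) ≤ −(x₁² + x₂²). -/
open Real Set

/-- RCLF flow inequality for the controlled pendulum with impacts: for every
state `(x₁, x₂)` there is a torque `u` such that, for all disturbances `(w₁, w₂)` in the box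
`[0, w̄₁] × [0, w̄₂]`, `⟨∇V(x), F(x,u,w)⟩ ≤ −(x₁² + x₂²)` where `V(x) = 2x₁² + 2x₁x₂ + x₂²`. -/
theorem stmt_13 (a b wbar₁ wbar₂ : ℝ) (ha : 0 < a) (hb : 0 ≤ b)
    (hw₁ : 0 ≤ wbar₁) (hw₂ : 0 ≤ wbar₂) (x₁ x₂ : ℝ) :
    ∃ u : ℝ, ∀ w₁ ∈ Icc (0 : ℝ) wbar₁, ∀ w₂ ∈ Icc (0 : ℝ) wbar₂,
      4 * x₁ * x₂ + 2 * x₂ ^ 2 +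
        2 * (-a * Real.sin x₁ - (b + w₂) * x₂ + u + w₁) * (x₂ + x₁) ≤
      -(x₁ ^ 2 + x₂ ^ 2) := by
  obtain ⟨s, hsdef⟩ : ∃ s, s = x₂ + x₁ := ⟨_, rfl⟩
  obtain ⟨A, hA⟩ : ∃ A : ℝ, A = Real.sign s := ⟨_, rfl⟩
  refine ⟨a * Real.sin x₁ + b * x₂ - (x₁ + 3 * x₂) / 2 - (wbar₁ + wbar₂ * |x₂|) * A, ?_⟩
  rintro w₁ ⟨hw1a, hw1b⟩ w₂ ⟨hw2a, hw2b⟩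
  have hs : A * s = |s| := by
    rcases lt_trichotomy s 0 with h | h | h
    · rw [hA, Real.sign_of_neg h, abs_of_neg h]; ring
    · simp [hA, h]
    · rw [hA, Real.sign_of_pos h, abs_of_pos h]; ring
  have h1 : s * w₁ ≤ |s| * wbar₁ := by
    calc s * w₁ ≤ |s| * w₁ := by
          exact mul_le_mul_of_nonneg_right (le_abs_self s) hw1a
      _ ≤ |s| * wbar₁ := mul_le_mul_of_nonneg_left hw1b (abs_nonneg s)
  have h2 : -(s * w₂ * x₂) ≤ wbar₂ * (|s| * |x₂|) := by
    have : -(s * x₂) ≤ |s| * |x₂| := by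
      rw [← abs_mul]
      exact neg_le_abs _
    calc -(s * w₂ * x₂) = w₂ * (-(s * x₂)) := by ring
      _ ≤ w₂ * (|s| * |x₂|) := mul_le_mul_of_nonneg_left this hw2a
      _ ≤ wbar₂ * (|s| * |x₂|) :=
          mul_le_mul_of_nonneg_right hw2b (by positivity)
  have hs1 : wbar₁ * (A * s) = wbar₁ * |s| := by rw [hs]
  have hs2 : wbar₂ * |x₂| * (A * s) = wbar₂ * |x₂| * |s| := by rw [hs]
  subst hsdef
  nlinarith [hs1, hs2, h1, h2, abs_nonneg x₂]
end

section
/- Let 0 < e₀ < e₁ < 1 with 2·e₁ − e₀ < 1, let ρ̃ : [−π/2, 0] → ℝ be continuous with −1 < ρ̃(η) < 0 for all η ∈ [−π/2, 0], and let e : [−π/2, 0] → ℝ be continuous with e₀ ≤ e(η) ≤ e₁ for all η ∈ [−π/2, 0]. Define V : ℝ² → ℝ by V(x) = 2x₁² + 2x₁x₂ + x₂² and λ := min_{η ∈ [−π/2, 0]} min{ 2·(1 − (1 + ρ̃(η))²), 1 − (e(η) + e₁ − e₀)² } (the minimum exists by compactness and continuity). Then λ > 0, and for every x = (x₁, x₂)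 ∈ ℝ² with −π/2 ≤ x₁ ≤ 0 and x₂ ≤ 0, every u_d ∈ [x₁, 0], and every w_d ∈ [0, e₁ − e₀]: V( (1 + ρ̃(u_d))·x₁, −(e(u_d) + w_d)·x₂ ) − V(x) ≤ −λ·(x₁² + x₂²). -/
open Real Set

/-- RCLF jump inequality for the controlled pendulum with impacts: with
`V(x) = 2x₁² + 2x₁x₂ + x₂²` and
`λ = min over η ∈ [−π/2, 0] of min{2(1 − (1 + ρ̃(η))²), 1 − (e(η) + e₁ − e₀)²}`, one has
`λ > 0` and `V(G(x, u_d, w_d)) − V(x) ≤ −λ(x₁² + x₂²)` on the jump set, for all admissible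
surface angles `u_d ∈ [x₁, 0]` and restitution disturbances `w_d ∈ [0, e₁ − e₀]`. -/
theorem stmt_15 (e₀ e₁ : ℝ) (he₀ : 0 < e₀) (he₀₁ : e₀ < e₁) (he₁ : e₁ < 1)
    (hsum : 2 * e₁ - e₀ < 1)
    (ρ : ℝ → ℝ) (hρcont : ContinuousOn ρ (Icc (-(π / 2)) 0))
    (hρbd : ∀ η ∈ Icc (-(π / 2)) 0, -1 < ρ η ∧ ρ η < 0)
    (e : ℝ → ℝ) (hecont : ContinuousOn e (Icc (-(π / 2)) 0))
    (hebd : ∀ η ∈ Icc (-(π / 2)) 0, e₀ ≤ e η ∧ e η ≤ e₁)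
    (V : ℝ × ℝ → ℝ)
    (hV : ∀ x : ℝ × ℝ, V x = 2 * x.1 ^ 2 + 2 * x.1 * x.2 + x.2 ^ 2)
    (lam : ℝ)
    (hlam : IsLeast
      ((fun η => min (2 * (1 - (1 + ρ η) ^ 2)) (1 - (e η + e₁ - e₀) ^ 2)) ''
        Icc (-(π / 2)) 0) lam) :
    0 < lam ∧
    ∀ x : ℝ × ℝ, -(π / 2) ≤ x.1 → x.1 ≤ 0 → x.2 ≤ 0 →
      ∀ ud ∈ Icc x.1 0, ∀ wd ∈ Icc (0 : ℝ) (e₁ - e₀),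
        V ((1 + ρ ud) * x.1, -(e ud + wd) * x.2) - V x ≤
          -lam * (x.1 ^ 2 + x.2 ^ 2) := by
  obtain ⟨⟨η, hη, hval⟩, hlb⟩ := hlam
  have hρη := hρbd η hη
  have heη := hebd η hη
  have hlampos : 0 < lam := by
    rw [← hval]
    apply lt_min
    · nlinarith [hρη.1, hρη.2]
    · nlinarith [heη.1, heη.2, he₀.le]
  refine ⟨hlampos, ?_⟩
  intro x hx1 hx2 hx3 ud hud wd hwd
  have hudI : ud ∈ Icc (-(π / 2)) 0 := ⟨le_trans hx1 hud.1, hud.2⟩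
  have hρu := hρbd ud hudI
  have heu := hebd ud hudI
  have hlamle : lam ≤ min (2 * (1 - (1 + ρ ud) ^ 2)) (1 - (e ud + e₁ - e₀) ^ 2) :=
    hlb ⟨ud, hudI, rfl⟩
  have h1 : lam ≤ 2 * (1 - (1 + ρ ud) ^ 2) := le_trans hlamle (min_le_left _ _)
  have h2 : lam ≤ 1 - (e ud + e₁ - e₀) ^ 2 := le_trans hlamle (min_le_right _ _)
  have hb : e ud + wd ≤ e ud + e₁ - e₀ := by linarith [hwd.2]
  have hbpos : 0 < e ud + wd := by linarith [hwd.1, heu.1]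
  have hbsq : (e ud + wd) ^ 2 ≤ (e ud + e₁ - e₀) ^ 2 := by nlinarith
  have hcross : 0 ≤ x.1 * x.2 := by nlinarith
  have ha : 0 < 1 + ρ ud := by linarith [hρu.1]
  rw [hV, hV]
  simp only
  nlinarith [sq_nonneg x.1, sq_nonneg x.2, mul_nonneg hcross (mul_pos ha hbpos).le]
end
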